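/- With the Choi–Lu shape operators A_1, A_2, A_3 and the Gauss-equation curvature tensor R as in the context, the curvature endomorphisms 𝓡(X,Y) (defined by g(𝓡(X,Y)Z,W) = R(X,Y,Z,W)) satisfy: 𝓡(E_1,E_2) = (H² + k̃ − 2μ²)·(E_1 ∧_g E_2); for every i with 3 ≤ i ≤ n, 𝓡(E_1,E_i) = (H² + k̃ + bμ)·(E_1 ∧_g E_i) + aμ·(E_2 ∧_g E_i) and 𝓡(E_2,E_i) = aμ·(E_1 ∧_g E_i) + (H² + k̃ − bμ)·(E_2 ∧_g E_i); and for all i, j with 3 ≤ i < j ≤ n, 𝓡(E_i,E_j) = (H² + k̃)·(E_i ∧_g E_j). -/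
import Mathlib


noncomputable section

namespace Wintgen

/-- The standard inner product `g` on `ℝ^n`. -/
def gg (n : ℕ) (x y : Fin n → ℝ) : ℝ := ∑ i, x i * y i

/-- The standard orthonormal basis vectors `E_i` (0-indexed). -/
def E (n : ℕ) (i : Fin n) : Fin n → ℝ := fun j => if j = i then 1 else 0

/-- Auxiliary: the `j`-th coordinate of `x` (0 if out of range). -/
def coord (n : ℕ) (x : Fin n → ℝ) (j : ℕ) : ℝ := if h : j < n then x ⟨j, h⟩ else 0

/-- The Choi–Lu shape operator `A_1`. -/
def A1 (n : ℕ) (a μ : ℝ) (x : Fin n → ℝ) : Fin n → ℝ := fun i =>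
  if (i : ℕ) = 0 then a * x i + μ * coord n x 1
  else if (i : ℕ) = 1 then μ * coord n x 0 + a * x i
  else a * x i

/-- The Choi–Lu shape operator `A_2`. -/
def A2 (n : ℕ) (b μ : ℝ) (x : Fin n → ℝ) : Fin n → ℝ := fun i =>
  if (i : ℕ) = 0 then (b + μ) * x i
  else if (i : ℕ) = 1 then (b - μ) * x i
  else b * x i

/-- The Choi–Lu shape operator `A_3 = c • id`. -/
def A3 (n : ℕ) (c : ℝ) (x : Fin n → ℝ) : Fin n → ℝ := fun i => c * x i

/-- The Gauss-equation curvature tensor `R`. -/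
def Rt (n : ℕ) (a b c μ k : ℝ) (X Y Z W : Fin n → ℝ) : ℝ :=
  (gg n (A1 n a μ X) W * gg n (A1 n a μ Y) Z - gg n (A1 n a μ X) Z * gg n (A1 n a μ Y) W)
  + (gg n (A2 n b μ X) W * gg n (A2 n b μ Y) Z - gg n (A2 n b μ X) Z * gg n (A2 n b μ Y) W)
  + (gg n (A3 n c X) W * gg n (A3 n c Y) Z - gg n (A3 n c X) Z * gg n (A3 n c Y) W)
  + k * (gg n X W * gg n Y Z - gg n X Z * gg n Y W)

/-- The Ricci tensor `Ricc(X,Y) = ∑ i, R(E_i, X, Y, E_i)`. -/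
def Ricc (n : ℕ) (a b c μ k : ℝ) (X Y : Fin n → ℝ) : ℝ :=
  ∑ i, Rt n a b c μ k (E n i) X Y (E n i)

/-- The scalar curvature `τ`. -/
def tau (n : ℕ) (a b c μ k : ℝ) : ℝ := ∑ i, Ricc n a b c μ k (E n i) (E n i)

/-- The Kulkarni–Nomizu product of two bilinear forms. -/
def KN (n : ℕ) (A B : (Fin n → ℝ) → (Fin n → ℝ) → ℝ) (X1 X2 X3 X4 : Fin n → ℝ) : ℝ :=
  A X1 X4 * B X2 X3 + A X2 X3 * B X1 X4 - A X1 X3 * B X2 X4 - A X2 X4 * B X1 X3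

/-- The Weyl conformal curvature tensor `C`. -/
def Ct (n : ℕ) (a b c μ k : ℝ) (X Y Z W : Fin n → ℝ) : ℝ :=
  Rt n a b c μ k X Y Z W
    - (1 / ((n : ℝ) - 2)) * KN n (gg n) (Ricc n a b c μ k) X Y Z W
    + (tau n a b c μ k / (2 * ((n : ℝ) - 1) * ((n : ℝ) - 2))) * KN n (gg n) (gg n) X Y Z W

/-- The endomorphism `(X ∧_A Y)` applied to `Z`. -/
def wedge (n : ℕ) (A : (Fin n → ℝ) → (Fin n → ℝ) → ℝ) (X Y Z : Fin n → ℝ) : Fin n → ℝ :=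
  fun j => A Y Z * X j - A X Z * Y j

/-- The endomorphism determined by `g(Op(X,Y)Z, W) = T(X,Y,Z,W)`:
its `j`-th component is `T(X,Y,Z,E_j)`. -/
def curvOp (n : ℕ) (T : (Fin n → ℝ) → (Fin n → ℝ) → (Fin n → ℝ) → (Fin n → ℝ) → ℝ)
    (X Y Z : Fin n → ℝ) : Fin n → ℝ := fun j => T X Y Z (E n j)

/-- Derivation-type action of a family of operators on a (0,4)-tensor. -/
def dotT (n : ℕ) (Op : (Fin n → ℝ) → (Fin n → ℝ) → (Fin n → ℝ) → (Fin n → ℝ))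
    (T : (Fin n → ℝ) → (Fin n → ℝ) → (Fin n → ℝ) → (Fin n → ℝ) → ℝ)
    (X1 X2 X3 X4 X Y : Fin n → ℝ) : ℝ :=
  - T (Op X Y X1) X2 X3 X4 - T X1 (Op X Y X2) X3 X4
  - T X1 X2 (Op X Y X3) X4 - T X1 X2 X3 (Op X Y X4)

/-- The (0,6)-tensor `R · C`. -/
def RC (n : ℕ) (a b c μ k : ℝ) :=
  dotT n (fun X Y => curvOp n (Rt n a b c μ k) X Y) (Ct n a b c μ k)

/-- The (0,6)-tensor `C · R`. -/
def CR (n : ℕ) (a b c μ k : ℝ) :=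
  dotT n (fun X Y => curvOp n (Ct n a b c μ k) X Y) (Rt n a b c μ k)

/-- The Tachibana tensor `Q(A, T)`. -/
def Q (n : ℕ) (A : (Fin n → ℝ) → (Fin n → ℝ) → ℝ)
    (T : (Fin n → ℝ) → (Fin n → ℝ) → (Fin n → ℝ) → (Fin n → ℝ) → ℝ) :=
  dotT n (fun X Y => wedge n A X Y) T


lemma gg_E {n : ℕ} (x : Fin n → ℝ) (u : Fin n) : gg n x (E n u) = x u := by
  simp [gg, E]

lemma gg_E' {n : ℕ} (x : Fin n → ℝ) (u : Fin n) : gg n (E n u) x = x u := by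
  simp [gg, E]

lemma gg_A1 {n : ℕ} (hn : 2 ≤ n) (a μ : ℝ) (x z : Fin n → ℝ) :
    gg n (A1 n a μ x) z
      = a * gg n x z + μ * (x ⟨1, by omega⟩ * z ⟨0, by omega⟩ + x ⟨0, by omega⟩ * z ⟨1, by omega⟩) := by
  have h0 : (0:ℕ) < n := by omega
  have h1 : (1:ℕ) < n := by omega
  have key : ∀ i : Fin n, A1 n a μ x i * z i
      = a * (x i * z i) + ((if i = (⟨0, h0⟩ : Fin n) then μ * coord n x 1 * z i else 0)
          + (if i = (⟨1, h1⟩ : Fin n) then μ * coord n x 0 * z i else 0)) := by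
    intro i
    unfold A1
    split_ifs <;> try ring1
    all_goals (exfalso; simp only [Fin.ext_iff, Fin.val_mk] at *; omega)
  unfold gg
  simp only [key, Finset.sum_add_distrib, ← Finset.mul_sum, Finset.sum_ite_eq',
    Finset.mem_univ, if_true]
  unfold coord
  rw [dif_pos h0, dif_pos h1]
  ring

lemma gg_A2 {n : ℕ} (hn : 2 ≤ n) (b μ : ℝ) (x z : Fin n → ℝ) :
    gg n (A2 n b μ x) z
      = b * gg n x z + μ * (x ⟨0, by omega⟩ * z ⟨0, by omega⟩ - x ⟨1, by omega⟩ * z ⟨1, by omega⟩) := by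
  have h0 : (0:ℕ) < n := by omega
  have h1 : (1:ℕ) < n := by omega
  have key : ∀ i : Fin n, A2 n b μ x i * z i
      = b * (x i * z i) + ((if i = (⟨0, h0⟩ : Fin n) then μ * (x i * z i) else 0)
          + (if i = (⟨1, h1⟩ : Fin n) then -(μ * (x i * z i)) else 0)) := by
    intro i
    unfold A2
    split_ifs <;> try ring1
    all_goals (exfalso; simp only [Fin.ext_iff, Fin.val_mk] at *; omega)
  unfold gg
  simp only [key, Finset.sum_add_distrib, ← Finset.mul_sum, Finset.sum_ite_eq',
    Finset.mem_univ, if_true]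
  ring

lemma gg_A3 {n : ℕ} (c : ℝ) (x z : Fin n → ℝ) :
    gg n (A3 n c x) z = c * gg n x z := by
  simp [gg, A3, Finset.mul_sum, mul_assoc]

set_option maxHeartbeats 4000000 in

lemma E_swap {n : ℕ} (u v : Fin n) : E n u v = E n v u := by
  unfold E
  rcases eq_or_ne u v with h | h
  · subst h; rfl
  · rw [if_neg h.symm, if_neg h]

lemma gg_A1_E0 {n : ℕ} (hn : 2 ≤ n) (a μ : ℝ) (z : Fin n → ℝ) :
    gg n (A1 n a μ (E n ⟨0, by omega⟩)) z = a * z ⟨0, by omega⟩ + μ * z ⟨1, by omega⟩ := by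
  rw [gg_A1 hn, gg_E']
  simp [E, Fin.ext_iff]

lemma gg_A1_E1 {n : ℕ} (hn : 2 ≤ n) (a μ : ℝ) (z : Fin n → ℝ) :
    gg n (A1 n a μ (E n ⟨1, by omega⟩)) z = μ * z ⟨0, by omega⟩ + a * z ⟨1, by omega⟩ := by
  rw [gg_A1 hn, gg_E']
  simp [E, Fin.ext_iff]
  ring

lemma gg_A1_Ei {n : ℕ} (hn : 2 ≤ n) {i : Fin n} (hi : 2 ≤ (i : ℕ)) (a μ : ℝ) (z : Fin n → ℝ) :
    gg n (A1 n a μ (E n i)) z = a * z i := by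
  rw [gg_A1 hn, gg_E']
  have h0 : ¬ ((0:ℕ) = (i:ℕ)) := by omega
  have h1 : ¬ ((1:ℕ) = (i:ℕ)) := by omega
  simp [E, Fin.ext_iff, h0, h1]

lemma gg_A2_E0 {n : ℕ} (hn : 2 ≤ n) (b μ : ℝ) (z : Fin n → ℝ) :
    gg n (A2 n b μ (E n ⟨0, by omega⟩)) z = (b + μ) * z ⟨0, by omega⟩ := by
  rw [gg_A2 hn, gg_E']
  simp [E, Fin.ext_iff]
  ring

lemma gg_A2_E1 {n : ℕ} (hn : 2 ≤ n) (b μ : ℝ) (z : Fin n → ℝ) :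
    gg n (A2 n b μ (E n ⟨1, by omega⟩)) z = (b - μ) * z ⟨1, by omega⟩ := by
  rw [gg_A2 hn, gg_E']
  simp [E, Fin.ext_iff]
  ring

lemma gg_A2_Ei {n : ℕ} (hn : 2 ≤ n) {i : Fin n} (hi : 2 ≤ (i : ℕ)) (b μ : ℝ) (z : Fin n → ℝ) :
    gg n (A2 n b μ (E n i)) z = b * z i := by
  rw [gg_A2 hn, gg_E']
  have h0 : ¬ ((0:ℕ) = (i:ℕ)) := by omega
  have h1 : ¬ ((1:ℕ) = (i:ℕ)) := by omega
  simp [E, Fin.ext_iff, h0, h1]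

lemma gg_A3_E {n : ℕ} (c : ℝ) (u : Fin n) (z : Fin n → ℝ) :
    gg n (A3 n c (E n u)) z = c * z u := by
  rw [gg_A3, gg_E']

/-- the curvature endomorphisms `𝓡(E_u, E_v)` in Choi–Lu frames. -/
theorem statement_0 (n : ℕ) (hn : 4 ≤ n) (a b c μ k : ℝ) :
    (∀ Z : Fin n → ℝ,
      curvOp n (Rt n a b c μ k) (E n ⟨0, by omega⟩) (E n ⟨1, by omega⟩) Z
        = ((a ^ 2 + b ^ 2 + c ^ 2) + k - 2 * μ ^ 2) •
            wedge n (gg n) (E n ⟨0, by omega⟩) (E n ⟨1, by omega⟩) Z)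
    ∧ (∀ i : Fin n, 2 ≤ (i : ℕ) → ∀ Z : Fin n → ℝ,
      curvOp n (Rt n a b c μ k) (E n ⟨0, by omega⟩) (E n i) Z
        = ((a ^ 2 + b ^ 2 + c ^ 2) + k + b * μ) •
            wedge n (gg n) (E n ⟨0, by omega⟩) (E n i) Z
          + (a * μ) • wedge n (gg n) (E n ⟨1, by omega⟩) (E n i) Z)
    ∧ (∀ i : Fin n, 2 ≤ (i : ℕ) → ∀ Z : Fin n → ℝ,
      curvOp n (Rt n a b c μ k) (E n ⟨1, by omega⟩) (E n i) Z
        = (a * μ) • wedge n (gg n) (E n ⟨0, by omega⟩) (E n i) Z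
          + ((a ^ 2 + b ^ 2 + c ^ 2) + k - b * μ) •
              wedge n (gg n) (E n ⟨1, by omega⟩) (E n i) Z)
    ∧ (∀ i j : Fin n, 2 ≤ (i : ℕ) → (i : ℕ) < (j : ℕ) → ∀ Z : Fin n → ℝ,
      curvOp n (Rt n a b c μ k) (E n i) (E n j) Z
        = ((a ^ 2 + b ^ 2 + c ^ 2) + k) • wedge n (gg n) (E n i) (E n j) Z) := by
  have h2 : 2 ≤ n := by omega
  refine ⟨?_, ?_, ?_, ?_⟩
  · intro Z
    funext w
    simp only [curvOp, Rt, wedge, Pi.smul_apply, Pi.add_apply, smul_eq_mul,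
      gg_A1_E0 h2, gg_A1_E1 h2, gg_A2_E0 h2, gg_A2_E1 h2, gg_A3_E, gg_E']
    rw [E_swap (⟨0, by omega⟩ : Fin n) w, E_swap (⟨1, by omega⟩ : Fin n) w]
    ring
  · intro i hi Z
    funext w
    simp only [curvOp, Rt, wedge, Pi.smul_apply, Pi.add_apply, smul_eq_mul,
      gg_A1_E0 h2, gg_A1_Ei h2 hi, gg_A2_E0 h2, gg_A2_Ei h2 hi, gg_A3_E, gg_E']
    rw [E_swap (⟨0, by omega⟩ : Fin n) w, E_swap (⟨1, by omega⟩ : Fin n) w, E_swap i w]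
    ring
  · intro i hi Z
    funext w
    simp only [curvOp, Rt, wedge, Pi.smul_apply, Pi.add_apply, smul_eq_mul,
      gg_A1_E1 h2, gg_A1_Ei h2 hi, gg_A2_E1 h2, gg_A2_Ei h2 hi, gg_A3_E, gg_E']
    rw [E_swap (⟨0, by omega⟩ : Fin n) w, E_swap (⟨1, by omega⟩ : Fin n) w, E_swap i w]
    ring
  · intro i j hi hij Z
    funext w
    have hj : 2 ≤ (j : ℕ) := by omega
    simp only [curvOp, Rt, wedge, Pi.smul_apply, Pi.add_apply, smul_eq_mul,
      gg_A1_Ei h2 hi, gg_A1_Ei h2 hj, gg_A2_Ei h2 hi, gg_A2_Ei h2 hj, gg_A3_E, gg_E']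
    rw [E_swap i w, E_swap j w]
    ring

end Wintgen
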